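/- Let d ≥ 2 be an integer and let u_d(x) = (1 − x^{−1}) f_d(x). If p, q ∈ ℚ[x] are coprime, q ≠ 0, and ‖u_d − p/q‖ = −2‖q‖ − c for a positive integer c (i.e., p/q is a convergent of u_d with rate of approximation c), then ‖g_d − p(x^d)/((1 + x + ⋯ + x^{d−1})·q(x^d))‖ = −2(d‖q‖ + d − 1) − (d(c−1) + 1); moreover the polynomials p(x^d) and (1 + x + ⋯ + x^{d−1})·q(x^d) are coprime if and only if (x−1) does not divide p(x). -/

import Mathlib

open Polynomial

noncomputable section

/-- The coefficient of `x^{-n}` in the generalized Thue–Morse series `f_d`: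
`(-1)^s` if every base-`d` digit of `n` is `0` or `1` and exactly `s` digits equal `1`,
and `0` otherwise. -/
def tmCoeff (d n : ℕ) : ℚ :=
  if (Nat.digits d n).all (· ≤ 1) then (-1 : ℚ) ^ (Nat.digits d n).sum else 0

/-- We represent the field `ℚ((x⁻¹))` of formal Laurent series in `x⁻¹` as
`LaurentSeries ℚ` in the variable `y = x⁻¹`; the coefficient of `y^n` is the
coefficient of `x^{-n}`.  `fd d` is the generalized Thue–Morse function `f_d`. -/
def fd (d : ℕ) : LaurentSeries ℚ :=
  HahnSeries.ofPowerSeries ℤ ℚ (PowerSeries.mk fun n => tmCoeff d n)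

/-- The element `x` of `ℚ((x⁻¹))`, i.e. `y⁻¹`. -/
def xL : LaurentSeries ℚ := HahnSeries.single (-1 : ℤ) 1

/-- Substitution `x ↦ x^d` on `ℚ((x⁻¹))` (i.e. `y ↦ y^d`). -/
def substPow (d : ℕ) (u : LaurentSeries ℚ) : LaurentSeries ℚ :=
  if h : 0 < d then
    HahnSeries.embDomain
      (OrderEmbedding.ofStrictMono (fun n : ℤ => (d : ℤ) * n)
        (fun a b hab => mul_lt_mul_of_pos_left hab (by exact_mod_cast h))) u
  else 0

/-- The degree `‖u‖` of a Laurent series `u ∈ ℚ((x⁻¹))`: the largest exponent of `x`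
with nonzero coefficient, i.e. minus the order in `y = x⁻¹`. -/
def ldeg (u : LaurentSeries ℚ) : ℤ := -u.order

/-- The embedding of `ℚ[x]` into `ℚ((x⁻¹))`, sending the polynomial variable to `x`. -/
def polyToLS (p : ℚ[X]) : LaurentSeries ℚ := Polynomial.aeval xL p

/-- `u ∈ ℚ((x⁻¹))` is well approximable if for every integer `C` there are polynomials
`p, q`, `q ≠ 0`, with `‖u - p/q‖ < -2‖q‖ - C`. -/
def wellApprox (u : LaurentSeries ℚ) : Prop :=
  ∀ C : ℤ, ∃ p q : ℚ[X], q ≠ 0 ∧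
    ldeg (u - polyToLS p / polyToLS q) < -2 * (q.natDegree : ℤ) - C

/-- `g_d(x) = x^{-d+1} f_d(x)`. -/
def gd (d : ℕ) : LaurentSeries ℚ := HahnSeries.single ((d : ℤ) - 1) 1 * fd d

/-- `h_d(x) = x^{-1} f_d(x)`. -/
def hd (d : ℕ) : LaurentSeries ℚ := HahnSeries.single (1 : ℤ) 1 * fd d

/-- `u_d(x) = (1 - x^{-1}) f_d(x)`. -/
def ud (d : ℕ) : LaurentSeries ℚ := (1 - HahnSeries.single (1 : ℤ) 1) * fd d

/-- The polynomial `1 + x + ⋯ + x^{d-1}`. -/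
def sumPow (d : ℕ) : ℚ[X] := ∑ i ∈ Finset.range d, X ^ i

/-- The real number `f_d(a) = ∏_{t=0}^∞ (1 - a^{-d^t})`. -/
def fdReal (a d : ℕ) : ℝ := ∏' t : ℕ, (1 - (a : ℝ) ^ (-(d ^ t : ℤ)))

/-- A real number `ξ` is badly approximable if there is `c > 0` with
`|ξ - P/Q| ≥ c/Q²` for all integers `P, Q` with `Q ≥ 1`. -/
def badApproxReal (ξ : ℝ) : Prop :=
  ∃ c : ℝ, 0 < c ∧ ∀ P Q : ℤ, 1 ≤ Q → c / (Q : ℝ) ^ 2 ≤ |ξ - (P : ℝ) / Q|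

/-!
The generalized Thue–Morse series satisfies `f_d(x) = (1 - x⁻¹) f_d(x^d)`, so with
`S = 1 + x + ⋯ + x^{d-1}` we get `u_d(x^d) = (1 - x^{-d}) f_d(x^d) = S g_d`. Substituting
`x ↦ x^d` in `u_d - p/q` therefore gives `S (g_d - p(x^d) / (S q(x^d)))`; the substitution
multiplies degrees by `d` and `S` has degree `d - 1`. For coprimality, `x^d ≡ 1` modulo `S`,
so `p(x^d) ≡ p(1)`.
-/

section SubstPow

variable {d : ℕ}

def substPowHom (hd0 : 0 < d) : LaurentSeries ℚ →+* LaurentSeries ℚ :=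
  HahnSeries.embDomainRingHom (AddMonoidHom.mulLeft (d : ℤ))
    (mul_right_injective₀ (by positivity)) (fun _ _ => mul_le_mul_iff_of_pos_left (by positivity))

lemma substPowHom_apply (hd0 : 0 < d) (u : LaurentSeries ℚ) :
    substPowHom hd0 u = substPow d u := by
  rw [substPow, dif_pos hd0]
  rfl

lemma substPow_ne_zero (hd0 : 0 < d) {u : LaurentSeries ℚ} (hu : u ≠ 0) :
    substPow d u ≠ 0 := by
  rw [← substPowHom_apply hd0]
  exact (_root_.map_ne_zero _).2 hu

lemma coeff_substPow_mul (hd0 : 0 < d) (u : LaurentSeries ℚ) (a : ℤ) :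
    (substPow d u).coeff (d * a) = u.coeff a := by
  rw [substPow, dif_pos hd0]
  exact HahnSeries.embDomain_coeff

lemma coeff_substPow_of_not_dvd (u : LaurentSeries ℚ) {m : ℤ} (hm : ¬ (d : ℤ) ∣ m) :
    (substPow d u).coeff m = 0 := by
  unfold substPow
  split_ifs
  · exact HahnSeries.embDomain_of_notMem_range fun ⟨a, ha⟩ => hm ⟨a, ha.symm⟩
  · rfl

lemma coeff_substPow_add_mul (u : LaurentSeries ℚ) {r : ℕ} (hr0 : 0 < r) (hr : r < d)
    (k : ℤ) :
    (substPow d u).coeff (r + d * k) = 0 := by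
  refine coeff_substPow_of_not_dvd u fun hdvd => ?_
  have hdr : (d : ℤ) ∣ r := (Int.dvd_add_left (dvd_mul_right _ _)).mp hdvd
  have := Nat.le_of_dvd hr0 (Int.natCast_dvd_natCast.mp hdr)
  omega

lemma substPow_single (hd0 : 0 < d) (a : ℤ) (r : ℚ) :
    substPow d (HahnSeries.single a r) = HahnSeries.single (d * a) r := by
  rw [substPow, dif_pos hd0]
  exact HahnSeries.embDomain_single

lemma ldeg_substPow (u : LaurentSeries ℚ) : ldeg (substPow d u) = d * ldeg u := by
  rcases Nat.eq_zero_or_pos d with rfl | hd0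
  · simp [substPow, ldeg]
  rcases eq_or_ne u 0 with rfl | hu
  · simp [← substPowHom_apply hd0, ldeg]
  have hu' := substPow_ne_zero hd0 hu
  have horder : (substPow d u).order = d * u.order := by
    rw [substPow, dif_pos hd0] at hu' ⊢
    apply WithTop.coe_injective
    rw [HahnSeries.order_eq_orderTop_of_ne_zero hu', HahnSeries.orderTop_embDomain,
      ← HahnSeries.order_eq_orderTop_of_ne_zero hu]
    rfl
  simp [ldeg, horder]

end SubstPow

lemma ldeg_mul {u v : LaurentSeries ℚ} (hu : u ≠ 0) (hv : v ≠ 0) :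
    ldeg (u * v) = ldeg u + ldeg v := by
  simp only [ldeg, HahnSeries.order_mul hu hv]
  ring

lemma ldeg_div {u v : LaurentSeries ℚ} (hu : u ≠ 0) (hv : v ≠ 0) :
    ldeg (u / v) = ldeg u - ldeg v := by
  have := ldeg_mul (div_ne_zero hu hv) hv
  rw [div_mul_cancel₀ u hv] at this
  omega

section PolyToLS

lemma xL_pow (n : ℕ) : xL ^ n = HahnSeries.single (-(n : ℤ)) 1 := by
  simp [xL, HahnSeries.single_pow]

lemma coeff_polyToLS (p : ℚ[X]) (m : ℤ) :
    (polyToLS p).coeff m = if m ≤ 0 then p.coeff (-m).toNat else 0 := by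
  induction p using Polynomial.induction_on' with
  | add f g hf hg =>
    simp only [polyToLS, map_add, HahnSeries.coeff_add] at hf hg ⊢
    split_ifs at hf hg ⊢ <;> simp [hf, hg]
  | monomial n a =>
    rw [polyToLS, aeval_monomial, xL_pow, LaurentSeries.algebraMap_apply, HahnSeries.C_apply,
      HahnSeries.single_mul_single, HahnSeries.coeff_single, coeff_monomial]
    split_ifs <;> first | omega | simp

lemma coeff_polyToLS_neg_natDegree (p : ℚ[X]) :
    (polyToLS p).coeff (-p.natDegree) = p.leadingCoeff := by
  simp [coeff_polyToLS]

lemma polyToLS_ne_zero {p : ℚ[X]} (hp : p ≠ 0) : polyToLS p ≠ 0 :=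
  HahnSeries.ne_zero_of_coeff_ne_zero (g := -p.natDegree)
    (by simpa [coeff_polyToLS_neg_natDegree] using hp)

lemma ldeg_polyToLS {p : ℚ[X]} (hp : p ≠ 0) : ldeg (polyToLS p) = p.natDegree := by
  have hle : (polyToLS p).order ≤ -p.natDegree :=
    HahnSeries.order_le_of_coeff_ne_zero (by simpa [coeff_polyToLS_neg_natDegree] using hp)
  have hord := HahnSeries.coeff_order_eq_zero.not.2 (polyToLS_ne_zero hp)
  rw [coeff_polyToLS] at hord
  split_ifs at hord
  · have := le_natDegree_of_ne_zero hord
    rw [ldeg]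
    omega
  · exact absurd rfl hord

lemma polyToLS_mul (p q : ℚ[X]) : polyToLS (p * q) = polyToLS p * polyToLS q :=
  map_mul (aeval xL) p q

lemma polyToLS_comp_X_pow {d : ℕ} (hd0 : 0 < d) (p : ℚ[X]) :
    polyToLS (p.comp (X ^ d)) = substPow d (polyToLS p) := by
  have hx : substPowHom hd0 xL = xL ^ d := by
    rw [substPowHom_apply, xL_pow, xL, substPow_single hd0, mul_neg_one]
  rw [← substPowHom_apply hd0, polyToLS, polyToLS, aeval_comp, map_pow, aeval_X, ← hx]
  exact aeval_algHom_apply (substPowHom hd0).toRatAlgHom xL p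

end PolyToLS

section ThueMorse

variable {d : ℕ}

lemma tmCoeff_add_mul (hd2 : 2 ≤ d) {r : ℕ} (hr : r < d) (m : ℕ) :
    tmCoeff d (r + d * m) = tmCoeff d r * tmCoeff d m := by
  rcases eq_or_ne r 0 with rfl | hr0
  · rcases eq_or_ne m 0 with rfl | hm
    · simp [tmCoeff]
    have hdigits := Nat.digits_add d hd2 0 m hr (Or.inr hm)
    rw [zero_add] at hdigits
    simp [tmCoeff, hdigits]
  · simp only [tmCoeff, Nat.digits_add d hd2 r m hr (Or.inl hr0), Nat.digits_of_lt d r hr0 hr]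
    by_cases hr1 : r ≤ 1 <;> simp [hr1, pow_add]

lemma coeff_fd_natCast (n : ℕ) : (fd d).coeff n = tmCoeff d n := by
  simp [fd]

lemma coeff_fd_of_neg {m : ℤ} (hm : m < 0) : (fd d).coeff m = 0 := by
  rw [fd, HahnSeries.ofPowerSeries_apply]
  exact HahnSeries.embDomain_of_notMem_range fun ⟨n, hn⟩ => by simp at hn; omega

lemma coeff_fd_add_mul (hd2 : 2 ≤ d) {r : ℕ} (hr : r < d) (k : ℤ) :
    (fd d).coeff (r + d * k) = tmCoeff d r * (fd d).coeff k := by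
  rcases lt_or_ge k 0 with hk | hk
  · rw [coeff_fd_of_neg hk, coeff_fd_of_neg (by nlinarith), mul_zero]
  · lift k to ℕ using hk
    rw [coeff_fd_natCast, ← tmCoeff_add_mul hd2 hr]
    exact_mod_cast coeff_fd_natCast _

lemma coeff_one_sub_single_one_mul (u : LaurentSeries ℚ) (m : ℤ) :
    ((1 - HahnSeries.single 1 1) * u).coeff m = u.coeff m - u.coeff (m - 1) := by
  have := HahnSeries.coeff_single_mul_add (r := (1 : ℚ)) (x := u) (a := m - 1) (b := 1)
  rw [sub_add_cancel, one_mul] at this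
  rw [sub_mul, one_mul, HahnSeries.coeff_sub, this]

lemma fd_eq_mul_substPow (hd2 : 2 ≤ d) :
    fd d = (1 - HahnSeries.single 1 1) * substPow d (fd d) := by
  have hd0 : 0 < d := by omega
  ext m
  obtain ⟨r, k, hr, rfl⟩ : ∃ (r : ℕ) (k : ℤ), r < d ∧ m = r + d * k := by
    refine ⟨(m % d).toNat, m / d, ?_, ?_⟩
    · have := Int.emod_lt_of_pos m (by omega : (0 : ℤ) < d)
      omega
    · rw [Int.toNat_of_nonneg (Int.emod_nonneg m (by omega)), Int.emod_add_mul_ediv]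
  rw [coeff_one_sub_single_one_mul, coeff_fd_add_mul hd2 hr]
  rcases Nat.lt_trichotomy r 1 with hr0 | rfl | hr1
  · obtain rfl : r = 0 := by omega
    have hprev : ((0 : ℕ) : ℤ) + d * k - 1 = ((d - 1 : ℕ) : ℤ) + d * (k - 1) := by
      push_cast [hd0]
      ring
    rw [hprev, coeff_substPow_add_mul (r := d - 1) _ (by omega) (by omega), Nat.cast_zero,
      zero_add, coeff_substPow_mul hd0]
    simp [tmCoeff]
  · rw [coeff_substPow_add_mul _ one_pos hr, Nat.cast_one, add_sub_cancel_left,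
      coeff_substPow_mul hd0]
    simp [tmCoeff, Nat.digits_of_lt d 1 one_ne_zero hr]
  · have hprev : (r : ℤ) + d * k - 1 = ((r - 1 : ℕ) : ℤ) + d * k := by
      push_cast [hr1.le]
      ring
    rw [hprev, coeff_substPow_add_mul _ (by omega) hr,
      coeff_substPow_add_mul (r := r - 1) _ (by omega) (by omega)]
    simp [tmCoeff, Nat.digits_of_lt d r (by omega) hr, hr1.not_ge]

end ThueMorse

section SumPow

lemma sumPow_mul_X_sub_one (d : ℕ) : sumPow d * (X - 1) = X ^ d - 1 := geom_sum_mul X d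

lemma sumPow_ne_zero {d : ℕ} (hd0 : d ≠ 0) : sumPow d ≠ 0 := (monic_geom_sum_X hd0).ne_zero

lemma natDegree_sumPow (d : ℕ) : (sumPow d).natDegree = d - 1 := by
  rcases eq_or_ne d 0 with rfl | hd0
  · simp [sumPow]
  have hS := sumPow_ne_zero hd0
  have hX : (X - 1 : ℚ[X]) ≠ 0 := X_sub_C_ne_zero 1
  have h := congrArg natDegree (sumPow_mul_X_sub_one d)
  rw [natDegree_mul hS hX, ← C_1, natDegree_X_sub_C, natDegree_X_pow_sub_C] at h
  omega

lemma sumPow_dvd_comp_X_pow_sub_C_eval_one (d : ℕ) (p : ℚ[X]) :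
    sumPow d ∣ p.comp (X ^ d) - C (p.eval 1) := by
  have h := map_dvd (compRingHom (X ^ d)) (X_sub_C_dvd_sub_C_eval (p := p) (a := 1))
  exact (Dvd.intro _ (sumPow_mul_X_sub_one d)).trans (by simpa using h)

lemma isCoprime_comp_X_pow_sumPow_iff {d : ℕ} (hd2 : 2 ≤ d) (p : ℚ[X]) :
    IsCoprime (p.comp (X ^ d)) (sumPow d) ↔ p.eval 1 ≠ 0 := by
  obtain ⟨k, hk⟩ := sumPow_dvd_comp_X_pow_sub_C_eval_one d p
  rw [show p.comp (X ^ d) = C (p.eval 1) + sumPow d * k by rw [← hk]; ring,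
    IsCoprime.add_mul_left_left_iff]
  constructor
  · rintro h he
    rw [he, C_0, isCoprime_zero_left] at h
    exact not_isUnit_of_natDegree_pos _ (by rw [natDegree_sumPow]; omega) h
  · intro he
    exact isCoprime_one_left.of_isCoprime_of_dvd_left (isUnit_C.mpr he.isUnit).dvd

end SumPow

lemma substPow_ud {d : ℕ} (hd2 : 2 ≤ d) : substPow d (ud d) = polyToLS (sumPow d) * gd d := by
  obtain ⟨e, rfl⟩ : ∃ e, d = e + 1 := ⟨d - 1, by omega⟩
  set y : LaurentSeries ℚ := HahnSeries.single 1 1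
  set V := substPow (e + 1) (fd (e + 1))
  set S := polyToLS (sumPow (e + 1))
  have hy : ∀ n : ℕ, y ^ n = HahnSeries.single (n : ℤ) 1 := fun n => by
    simp [y, HahnSeries.single_pow]
  have hxy : xL * y = 1 := by simp [xL, y, HahnSeries.single_mul_single]
  have hxy_pow : xL ^ (e + 1) * y ^ (e + 1) = 1 := by rw [← mul_pow, hxy, one_pow]
  have hS : S * (xL - 1) = xL ^ (e + 1) - 1 := by
    simpa [S, polyToLS] using congrArg polyToLS (sumPow_mul_X_sub_one (e + 1))
  have hsubst : substPow (e + 1) (ud (e + 1)) = (1 - y ^ (e + 1)) * V := by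
    rw [ud, ← substPowHom_apply (by omega), map_mul, map_sub, map_one, substPowHom_apply,
      substPowHom_apply, substPow_single (by omega), hy, mul_one]
  have hgd : gd (e + 1) = y ^ e * fd (e + 1) := by
    rw [gd, hy]
    push_cast
    ring_nf
  have hfd : fd (e + 1) = (1 - y) * V := fd_eq_mul_substPow hd2
  rw [hsubst, hgd, hfd]
  -- `S y^e (1 - y) = 1 - y^{e+1}`, from `S (x - 1) = x^{e+1} - 1` and `x y = 1`
  linear_combination V * (-(y ^ (e + 1)) * hS - hxy_pow + S * y ^ e * hxy)

lemma gd_sub_comp_X_pow_div {d : ℕ} (hd2 : 2 ≤ d) (p q : ℚ[X]) :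
    gd d - polyToLS (p.comp (X ^ d)) / polyToLS (sumPow d * q.comp (X ^ d)) =
      substPow d (ud d - polyToLS p / polyToLS q) / polyToLS (sumPow d) := by
  have hd0 : 0 < d := by omega
  have hS : polyToLS (sumPow d) ≠ 0 := polyToLS_ne_zero (sumPow_ne_zero (by omega))
  rw [← substPowHom_apply hd0, map_sub, map_div₀, substPowHom_apply, substPowHom_apply,
    substPowHom_apply, substPow_ud hd2, polyToLS_mul, polyToLS_comp_X_pow hd0,
    polyToLS_comp_X_pow hd0, sub_div, mul_div_cancel_left₀ _ hS, div_div, mul_comm]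

theorem convergents_from_ud_general (d : ℕ) (hd2 : 2 ≤ d) (p q : ℚ[X])
    (hpq : IsCoprime p q) (c : ℤ) (hc : 0 < c)
    (h : ldeg (ud d - polyToLS p / polyToLS q) = -2 * (q.natDegree : ℤ) - c) :
    ldeg (gd d - polyToLS (p.comp (X ^ d)) / polyToLS (sumPow d * q.comp (X ^ d)))
        = -2 * ((d : ℤ) * (q.natDegree : ℤ) + (d : ℤ) - 1) - ((d : ℤ) * (c - 1) + 1) ∧
      (IsCoprime (p.comp (X ^ d)) (sumPow d * q.comp (X ^ d)) ↔ ¬ (X - 1 ∣ p)) := by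
  have hS : sumPow d ≠ 0 := sumPow_ne_zero (by omega)
  have hw : ud d - polyToLS p / polyToLS q ≠ 0 := by
    rintro hw
    rw [hw, ldeg, HahnSeries.order_zero] at h
    omega
  refine ⟨?_, ?_⟩
  · rw [gd_sub_comp_X_pow_div hd2, ldeg_div (substPow_ne_zero (by omega) hw) (polyToLS_ne_zero hS),
      ldeg_substPow, h, ldeg_polyToLS hS, natDegree_sumPow]
    push_cast [show 1 ≤ d by omega]
    ring
  · rw [IsCoprime.mul_right_iff, isCoprime_comp_X_pow_sumPow_iff hd2, ← C_1, dvd_iff_isRoot,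
      IsRoot.def]
    exact and_iff_left (hpq.map (compRingHom (X ^ d)))

/-- Lemma 2: convergents of `u_d` produce convergents of `g_d`. -/
theorem convergents_from_ud (d : ℕ) (hd2 : 2 ≤ d) (p q : ℚ[X])
    (hpq : IsCoprime p q) (hq : q ≠ 0) (c : ℤ) (hc : 0 < c)
    (h : ldeg (ud d - polyToLS p / polyToLS q) = -2 * (q.natDegree : ℤ) - c) :
    ldeg (gd d - polyToLS (p.comp (X ^ d)) / polyToLS (sumPow d * q.comp (X ^ d)))
        = -2 * ((d : ℤ) * (q.natDegree : ℤ) + (d : ℤ) - 1) - ((d : ℤ) * (c - 1) + 1) ∧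
      (IsCoprime (p.comp (X ^ d)) (sumPow d * q.comp (X ^ d)) ↔ ¬ (X - 1 ∣ p)) :=
  convergents_from_ud_general d hd2 p q hpq c hc h
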